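/- arXiv:1010.2371 — 4 statements merged into one kernel-verified Lean document; each statement's English description precedes it below -/
import Mathlib

section
/- Let m be an even positive integer, let S be a nonempty subset of Fin m, and let δ ∈ (0,1]. Let σ be a permutation of Fin m drawn uniformly at random, let H = {t ∈ Fin m : t < m/2} be the set of first-half positions, and let X = |{t ∈ S : σ t ∈ H}|. Then the probability that |X − |S|/2| > δ·|S|/2 is at most 2·exp(−|S|·δ²/6). -/
/-!
Chernoff bound for sampling without replacement. Write `X σ = #{t ∈ S | σ t ∈ H}` with
`#H ≤ #Hᶜ`. Swapping `σ a` with a partner outside `H` shows that `σ` maps a set `T` into `H`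
for at most a `2 ^ (-#T)` fraction of permutations; expanding `x ^ X` over subsets of `S` then
gives the binomial moment bound `E[x ^ X] ≤ ((1 + x) / 2) ^ #S` for `x ≥ 1`. Markov with
`x = exp (2δ)` and `cosh δ ≤ exp (δ² / 2)` bound the upper tail by `exp (-#S δ² / 2)`, and
the lower tail is the upper tail of the complementary half.
-/

open scoped Classical

open Finset Equiv Real

section
variable {α : Type*} [Fintype α] [DecidableEq α] {H : Finset α}

lemma exists_injOn_mapsTo_compl [Nonempty α] (hH : #H ≤ #Hᶜ) :
    ∃ φ : α → α, Set.MapsTo φ H ↑Hᶜ ∧ Set.InjOn φ H :=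
  (H : Set α).toFinite.exists_injOn_of_encard_le (t := ((Hᶜ : Finset α) : Set α))
    (by simp only [Set.encard_coe_eq_coe_finsetCard]; exact_mod_cast hH)

/-- Composing with the transposition `(σ a, φ (σ a))` moves `σ a` out of `H` without moving
`σ '' T`, so it injects the permutations with `σ a ∈ H` into those with `σ a ∉ H`. -/
lemma two_mul_card_perm_mapsTo_insert_le (hH : #H ≤ #Hᶜ) {T : Finset α} {a : α} (ha : a ∉ T) :
    2 * #{σ : Perm α | ∀ t ∈ insert a T, σ t ∈ H} ≤ #{σ : Perm α | ∀ t ∈ T, σ t ∈ H} := by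
  have : Nonempty α := ⟨a⟩
  obtain ⟨φ, hmaps, hinj⟩ := exists_injOn_mapsTo_compl hH
  set A : Finset (Perm α) := {σ | ∀ t ∈ T, σ t ∈ H}
  have hinsert : ({σ : Perm α | ∀ t ∈ insert a T, σ t ∈ H} : Finset _) = {σ ∈ A | σ a ∈ H} := by
    ext σ; simp [A, and_comm]
  have hswap : #{σ ∈ A | σ a ∈ H} ≤ #{σ ∈ A | σ a ∉ H} := by
    refine card_le_card_of_injOn (fun σ => swap (σ a) (φ (σ a)) * σ) ?_ ?_
    · intro σ hσ
      simp only [A, coe_filter, mem_filter, mem_univ, true_and, Set.mem_ofPred_eq] at hσ ⊢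
      have hφ : φ (σ a) ∉ H := by simpa using hmaps hσ.2
      refine ⟨fun t ht => ?_, by simpa using hφ⟩
      rw [Perm.mul_apply, swap_apply_of_ne_of_ne]
      · exact hσ.1 t ht
      · exact σ.injective.ne (ne_of_mem_of_not_mem ht ha)
      · exact ne_of_mem_of_not_mem (hσ.1 t ht) hφ
    · intro σ hσ τ hτ h
      simp only [A, coe_filter, mem_filter, mem_univ, true_and, Set.mem_ofPred_eq] at hσ hτ
      have ha' : σ a = τ a := hinj hσ.2 hτ.2 (by simpa using congrArg (· a) h)
      simpa [ha'] using h
  rw [hinsert, ← card_filter_add_card_filter_not (s := A) (fun σ => σ a ∈ H)]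
  omega

lemma card_perm_mapsTo_mul_two_pow_le (hH : #H ≤ #Hᶜ) (T : Finset α) :
    #{σ : Perm α | ∀ t ∈ T, σ t ∈ H} * 2 ^ #T ≤ (Fintype.card α).factorial := by
  induction T using Finset.induction_on with
  | empty => simp [Fintype.card_perm]
  | insert a T ha ih =>
    calc #{σ : Perm α | ∀ t ∈ insert a T, σ t ∈ H} * 2 ^ #(insert a T)
        = 2 * #{σ : Perm α | ∀ t ∈ insert a T, σ t ∈ H} * 2 ^ #T := by
          rw [card_insert_of_notMem ha, pow_succ]; ring
      _ ≤ #{σ : Perm α | ∀ t ∈ T, σ t ∈ H} * 2 ^ #T := by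
          gcongr; exact two_mul_card_perm_mapsTo_insert_le hH ha
      _ ≤ _ := ih

lemma pow_card_filter_eq_sum_powerset {ι : Type*} (S : Finset ι) (p : ι → Prop) [DecidablePred p]
    (x : ℝ) : x ^ #{t ∈ S | p t} = ∑ T ∈ S.powerset with ∀ t ∈ T, p t, (x - 1) ^ #T := by
  have hpow : (S.filter p).powerset = S.powerset.filter (fun T => ∀ t ∈ T, p t) := by
    ext T; simp only [mem_powerset, mem_filter, subset_iff]; grind
  rw [← hpow]
  conv_lhs => rw [show x = (x - 1) + 1 by ring, ← sum_pow_mul_eq_add_pow]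
  simp

lemma sum_pow_card_filter_le (hH : #H ≤ #Hᶜ) (S : Finset α) {x : ℝ} (hx : 1 ≤ x) :
    ∑ σ : Perm α, x ^ #{t ∈ S | σ t ∈ H} ≤ (Fintype.card α).factorial * ((1 + x) / 2) ^ #S := by
  calc ∑ σ : Perm α, x ^ #{t ∈ S | σ t ∈ H}
      = ∑ T ∈ S.powerset, (x - 1) ^ #T * #{σ : Perm α | ∀ t ∈ T, σ t ∈ H} := by
        simp_rw [pow_card_filter_eq_sum_powerset]
        rw [sum_comm' (t' := S.powerset) (s' := fun T => {σ : Perm α | ∀ t ∈ T, σ t ∈ H})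
          fun _ _ => by simp [and_comm]]
        simp [mul_comm]
    _ ≤ ∑ T ∈ S.powerset, (x - 1) ^ #T * ((Fintype.card α).factorial / 2 ^ #T) := by
        gcongr with T
        rw [le_div_iff₀ (by positivity)]
        exact_mod_cast card_perm_mapsTo_mul_two_pow_le hH T
    _ = (Fintype.card α).factorial * ∑ T ∈ S.powerset, ((x - 1) / 2) ^ #T * 1 ^ (#S - #T) := by
        rw [mul_sum]; congr! 1 with T; rw [div_pow]; ring
    _ = (Fintype.card α).factorial * ((1 + x) / 2) ^ #S := by
        rw [sum_pow_mul_eq_add_pow]; ring_nf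

lemma one_add_exp_two_mul_div_two_le (x : ℝ) : (1 + exp (2 * x)) / 2 ≤ exp (x + x ^ 2 / 2) := by
  have hcosh : (1 + exp (2 * x)) / 2 = exp x * cosh x := by
    rw [cosh_eq, mul_div_assoc', mul_add, ← exp_add, ← exp_add, add_neg_cancel, exp_zero, two_mul]
    ring
  rw [hcosh, exp_add]
  exact mul_le_mul_of_nonneg_left (cosh_le_exp_half_sq x) (exp_pos x).le

lemma card_perm_upper_tail_le (hH : #H ≤ #Hᶜ) (S : Finset α) {δ : ℝ} (hδ : 0 ≤ δ) :
    (#{σ : Perm α | (#S : ℝ) / 2 + δ * #S / 2 < #{t ∈ S | σ t ∈ H}} : ℝ)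
      ≤ (Fintype.card α).factorial * exp (-(#S * δ ^ 2) / 2) := by
  set n : ℝ := (#S : ℝ)
  set E : Finset (Perm α) := {σ | n / 2 + δ * n / 2 < #{t ∈ S | σ t ∈ H}}
  have hmarkov : (#E : ℝ) * exp (n * δ + n * δ ^ 2)
      ≤ ∑ σ : Perm α, exp (2 * δ) ^ #{t ∈ S | σ t ∈ H} := by
    calc (#E : ℝ) * exp (n * δ + n * δ ^ 2)
        ≤ ∑ σ ∈ E, exp (2 * δ) ^ #{t ∈ S | σ t ∈ H} := by
          rw [← nsmul_eq_mul]
          refine card_nsmul_le_sum _ _ _ fun σ hσ => ?_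
          rw [← exp_nat_mul]
          exact exp_le_exp.2 (by nlinarith [(mem_filter.1 hσ).2])
      _ ≤ _ := sum_le_sum_of_subset_of_nonneg (subset_univ _) fun _ _ _ => by positivity
  have hmgf : ∑ σ : Perm α, exp (2 * δ) ^ #{t ∈ S | σ t ∈ H}
      ≤ (Fintype.card α).factorial * exp (n * (δ + δ ^ 2 / 2)) := by
    calc _ ≤ (Fintype.card α).factorial * ((1 + exp (2 * δ)) / 2) ^ #S :=
          sum_pow_card_filter_le hH S (one_le_exp (by linarith))
      _ ≤ (Fintype.card α).factorial * exp (δ + δ ^ 2 / 2) ^ #S := by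
          gcongr; exact one_add_exp_two_mul_div_two_le δ
      _ = _ := by rw [← exp_nat_mul]
  calc (#E : ℝ) = #E * exp (n * δ + n * δ ^ 2) * exp (-(n * δ + n * δ ^ 2)) := by
        rw [mul_assoc, ← exp_add, add_neg_cancel, exp_zero, mul_one]
    _ ≤ (Fintype.card α).factorial * exp (n * (δ + δ ^ 2 / 2)) * exp (-(n * δ + n * δ ^ 2)) := by
        exact mul_le_mul_of_nonneg_right (hmarkov.trans hmgf) (exp_pos _).le
    _ = (Fintype.card α).factorial * exp (-(n * δ ^ 2) / 2) := by
        rw [mul_assoc, ← exp_add]; ring_nf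

lemma card_perm_abs_sub_half_gt_le (hH : #H = #Hᶜ) (S : Finset α) {δ : ℝ} (hδ : 0 ≤ δ) :
    (#{σ : Perm α | δ * #S / 2 < |(#{t ∈ S | σ t ∈ H} : ℝ) - #S / 2|} : ℝ)
      ≤ 2 * ((Fintype.card α).factorial * exp (-(#S * δ ^ 2) / 2)) := by
  have hcompl : ∀ σ : Perm α, (#{t ∈ S | σ t ∈ Hᶜ} : ℝ) = #S - #{t ∈ S | σ t ∈ H} := by
    intro σ
    rw [eq_sub_iff_add_eq, ← Nat.cast_add, add_comm]
    simp only [mem_compl]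
    rw [card_filter_add_card_filter_not]
  have hH_tail := card_perm_upper_tail_le hH.le S hδ
  have hHc_tail := card_perm_upper_tail_le (by rw [compl_compl, hH]) S hδ
  set A : Finset (Perm α) := {σ | (#S : ℝ) / 2 + δ * #S / 2 < #{t ∈ S | σ t ∈ H}}
  set B : Finset (Perm α) := {σ | (#S : ℝ) / 2 + δ * #S / 2 < #{t ∈ S | σ t ∈ Hᶜ}}
  have hsub : ({σ : Perm α | δ * #S / 2 < |(#{t ∈ S | σ t ∈ H} : ℝ) - #S / 2|} : Finset _)
      ⊆ A ∪ B := by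
    intro σ
    simp only [A, B, mem_filter, mem_union, mem_univ, true_and, lt_abs, hcompl]
    rintro (h | h)
    · left; linarith
    · right; linarith
  calc _ ≤ (#(A ∪ B) : ℝ) := by exact_mod_cast card_le_card hsub
    _ ≤ #A + #B := by exact_mod_cast card_union_le _ _
    _ ≤ _ := by linarith

end

theorem stmt_0_general (m : ℕ) (hme : Even m)
    (S : Finset (Fin m))
    (δ : ℝ) (hδ0 : 0 < δ) :
    ((Finset.univ.filter (fun σ : Equiv.Perm (Fin m) =>
        δ * (S.card : ℝ) / 2 <
          |((S.filter (fun t => ((σ t : ℕ) < m / 2))).card : ℝ) - (S.card : ℝ) / 2|)).card : ℝ)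
      / (Fintype.card (Equiv.Perm (Fin m)) : ℝ)
      ≤ 2 * Real.exp (-((S.card : ℝ) * δ ^ 2) / 6) := by
  set H : Finset (Fin m) := {i | (i : ℕ) < m / 2}
  have hH : #H = #Hᶜ := by
    rw [card_compl, Fintype.card_fin, Fin.card_filter_val_lt]
    obtain ⟨k, rfl⟩ := hme
    omega
  have hfilter : ∀ σ : Perm (Fin m), {t ∈ S | (σ t : ℕ) < m / 2} = {t ∈ S | σ t ∈ H} := by
    intro σ; simp [H]
  have hexp : exp (-(#S * δ ^ 2) / 2) ≤ exp (-(#S * δ ^ 2) / 6) :=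
    exp_le_exp.2 (by linarith [mul_nonneg (Nat.cast_nonneg (α := ℝ) #S) (sq_nonneg δ)])
  simp_rw [hfilter]
  rw [Fintype.card_perm, div_le_iff₀ (by positivity)]
  calc _ ≤ 2 * ((Fintype.card (Fin m)).factorial * exp (-(#S * δ ^ 2) / 2)) :=
        card_perm_abs_sub_half_gt_le hH S hδ0.le
    _ ≤ 2 * exp (-(#S * δ ^ 2) / 6) * (Fintype.card (Fin m)).factorial := by
        rw [mul_comm _ (exp _), ← mul_assoc]
        gcongr

/-- For `m` an even positive integer, `S` a nonempty subset of `Fin m`,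
`δ ∈ (0,1]`, and `σ` a uniformly random permutation of `Fin m`, the number of
elements of `S` whose image under `σ` lands in the first half `{t : t < m/2}`
deviates from `|S|/2` by more than `δ·|S|/2` with probability at most
`2·exp(−|S|·δ²/6)`. -/
theorem stmt_0 (m : ℕ) (hm : 0 < m) (hme : Even m)
    (S : Finset (Fin m)) (hS : S.Nonempty)
    (δ : ℝ) (hδ0 : 0 < δ) (hδ1 : δ ≤ 1) :
    ((Finset.univ.filter (fun σ : Equiv.Perm (Fin m) =>
        δ * (S.card : ℝ) / 2 <
          |((S.filter (fun t => ((σ t : ℕ) < m / 2))).card : ℝ) - (S.card : ℝ) / 2|)).card : ℝ)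
      / (Fintype.card (Equiv.Perm (Fin m)) : ℝ)
      ≤ 2 * Real.exp (-((S.card : ℝ) * δ ^ 2) / 6) :=
  stmt_0_general m hme S δ hδ0
end

section
/- (Good permutation lemma.) Let m, κ be positive integers with 2κ dividing m, let δ ∈ (0,1], and let A, B ⊆ Fin m with A ∩ B nonempty. Let σ be a permutation of Fin m drawn uniformly at random, let H = {t ∈ Fin m : t < m/2}, and for k ∈ {1,…,κ} let C_k = {t ∈ Fin m : m/2 + (k−1)·m/(2κ) ≤ t < m/2 + k·m/(2κ)}. Then with probability at least 1 − 2·exp(−δ²·|A|/6) − 2·exp(−δ²·|B|/6) − 2κ·exp(−δ²·|A∩B|/(6κ)), all of the following hold simultaneously: | |{t ∈ A : σ t ∈ H}| − |A|/2 | ≤ δ·|A|/2; | |{t ∈ B : σ t ∈ H}| − |B|/2 | ≤ δ·|B|/2; and for every k ∈ {1,…,κ}, | |{t ∈ A∩B : σ t ∈ C_k}| − |A∩B|/(2κ) | ≤ δ·|A∩B|/(2κ). -/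
/-!
For a uniformly random permutation `σ` of an `N`-element type, `X = #{t ∈ S | σ t ∈ C}` has
mean `μ = |S| |C| / N`. Expanding `(1 + w) ^ X` over the subsets `T ⊆ S` and using that at most
`N! (|C| / N) ^ |T|` permutations map `T` into `C` shows that the moment generating function
of `X` is dominated by the binomial one, `E z ^ X ≤ exp ((z - 1) μ)` (for `z < 1` after passing
to the complement of `C`). Markov's inequality then yields the Chernoff bound
`P (|X - μ| > δ μ) ≤ 2 exp (-δ² μ / 3)` for `δ ∈ [0, 1]`. The half `H` has `m / 2` positions and
each chunk `C_k` has `m / (2κ)`, so the means are `|A| / 2`, `|B| / 2` and `|A ∩ B| / (2κ)`, and a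
union bound over the `2 + κ` events gives the theorem.
-/

open scoped Classical

open Finset Equiv Real
open scoped Nat

theorem Nat.descFactorial_mul_pow_le {c N : ℕ} (h : c ≤ N) (j : ℕ) :
    c.descFactorial j * N ^ j ≤ N.descFactorial j * c ^ j := by
  induction j with
  | zero => simp
  | succ j ih =>
    have hstep : (c - j) * N ≤ (N - j) * c := by
      rw [Nat.sub_mul, Nat.sub_mul, Nat.mul_comm c N]
      exact Nat.sub_le_sub_left (Nat.mul_le_mul_left j h) _
    calc c.descFactorial (j + 1) * N ^ (j + 1) = ((c - j) * N) * (c.descFactorial j * N ^ j) := by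
          rw [Nat.descFactorial_succ, pow_succ]; ring
      _ ≤ ((N - j) * c) * (N.descFactorial j * c ^ j) := Nat.mul_le_mul hstep ih
      _ = N.descFactorial (j + 1) * c ^ (j + 1) := by rw [Nat.descFactorial_succ, pow_succ]; ring

theorem Fin.card_filter_le_val_and_val_lt {m L R : ℕ} (h : R ≤ m) :
    #{x : Fin m | L ≤ (x : ℕ) ∧ (x : ℕ) < R} = R - L := by
  have hdiff : univ.filter (fun x : Fin m => L ≤ (x : ℕ) ∧ (x : ℕ) < R)
      = univ.filter (fun x : Fin m => (x : ℕ) < R)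
        \ univ.filter (fun x : Fin m => (x : ℕ) < L) := by
    ext x
    simp only [mem_filter, mem_sdiff, mem_univ, true_and, not_lt, and_comm]
  rcases le_total L R with hLR | hRL
  · rw [hdiff, card_sdiff_of_subset (monotone_filter_right _ fun x _ hx => hx.trans_le hLR),
      Fin.card_filter_val_lt, Fin.card_filter_val_lt, min_eq_right h, min_eq_right (hLR.trans h)]
  · rw [Nat.sub_eq_zero_of_le hRL, card_eq_zero, filter_eq_empty_iff]
    omega

theorem card_filter_mul_exp_le_sum {ι : Type*} (s : Finset ι) (f : ι → ℝ) (a : ℝ) :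
    #{i ∈ s | a ≤ f i} * exp a ≤ ∑ i ∈ s, exp (f i) := by
  calc #{i ∈ s | a ≤ f i} * exp a ≤ ∑ i ∈ s with a ≤ f i, exp (f i) := by
        rw [← nsmul_eq_mul]
        exact card_nsmul_le_sum _ _ _ fun i hi => exp_le_exp.mpr (mem_filter.mp hi).2
    _ ≤ ∑ i ∈ s, exp (f i) :=
        sum_le_sum_of_subset_of_nonneg (filter_subset _ _) fun i _ _ => (exp_pos _).le

theorem le_card_filter_and_and_forall {β ι : Type*} [Fintype β] {p q : β → Prop}
    {r : ι → β → Prop} [DecidablePred p] [DecidablePred q] [∀ i, DecidablePred (r i)]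
    {s : Finset ι} {a b c : ℝ} (hp : (#{x | ¬ p x} : ℝ) ≤ a) (hq : (#{x | ¬ q x} : ℝ) ≤ b)
    (hr : ∀ i ∈ s, (#{x | ¬ r i x} : ℝ) ≤ c) :
    Fintype.card β - a - b - #s * c ≤ #{x | p x ∧ q x ∧ ∀ i ∈ s, r i x} := by
  have hsplit := card_filter_add_card_filter_not (s := univ) fun x => p x ∧ q x ∧ ∀ i ∈ s, r i x
  have hbad : #{x | ¬ (p x ∧ q x ∧ ∀ i ∈ s, r i x)}
      ≤ #{x | ¬ p x} + #{x | ¬ q x} + ∑ i ∈ s, #{x | ¬ r i x} := by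
    refine (card_le_card ?_).trans ((card_union_le _ _).trans
      (add_le_add (card_union_le _ _) card_biUnion_le))
    intro x hx
    simp only [mem_filter, mem_univ, true_and, mem_union, mem_biUnion, not_and_or,
      not_forall] at hx ⊢
    tauto
  have hsum : ∑ i ∈ s, (#{x | ¬ r i x} : ℝ) ≤ #s * c := by
    simpa using sum_le_card_nsmul s _ c hr
  rw [card_univ] at hsplit
  have hcard : Fintype.card β ≤ #{x | p x ∧ q x ∧ ∀ i ∈ s, r i x} + #{x | ¬ p x} + #{x | ¬ q x}
      + ∑ i ∈ s, #{x | ¬ r i x} := by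
    omega
  have := (Nat.cast_le (α := ℝ)).mpr hcard
  push_cast at this
  linarith

theorem sq_div_three_le_one_add_mul_log_sub_of_nonneg {y : ℝ} (hy0 : 0 ≤ y) (hy1 : y ≤ 1) :
    y ^ 2 / 3 ≤ (1 + y) * log (1 + y) - y := by
  have hlog := le_log_one_add_of_nonneg hy0
  rw [div_le_iff₀ (by linarith)] at hlog
  nlinarith [mul_le_mul_of_nonneg_left hlog (by linarith : (0 : ℝ) ≤ 1 + y),
    mul_nonneg (sq_nonneg y) (sub_nonneg.mpr hy1)]

theorem sq_div_three_le_one_add_mul_log_sub_of_nonpos {y : ℝ} (hy : -1 < y) (hy0 : y ≤ 0) :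
    y ^ 2 / 3 ≤ (1 + y) * log (1 + y) - y := by
  let g : ℝ → ℝ := fun x => (1 + x) * log (1 + x) - x - x ^ 2 / 3
  have hderiv : ∀ x ∈ Set.Ioi (-1 : ℝ), HasDerivAt g (log (1 + x) - 2 * x / 3) x := by
    intro x hx
    have h1x : 1 + x ≠ 0 := by have := Set.mem_Ioi.mp hx; linarith
    have hlin : HasDerivAt (fun x : ℝ => 1 + x) 1 x := (hasDerivAt_id x).const_add 1
    refine (((hlin.mul (hlin.log h1x)).sub (hasDerivAt_id' x)).sub
      ((hasDerivAt_pow 2 x).div_const 3)).congr_deriv ?_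
    field_simp
    ring
  have hanti : AntitoneOn g (Set.Ioc (-1) 0) := by
    refine antitoneOn_of_deriv_nonpos (convex_Ioc _ _) ?_ ?_ ?_
    · exact fun x hx => (hderiv x hx.1).continuousAt.continuousWithinAt
    · rw [interior_Ioc]
      exact fun x hx => (hderiv x hx.1).differentiableAt.differentiableWithinAt
    · rw [interior_Ioc]
      intro x hx
      rw [(hderiv x hx.1).deriv]
      linarith [log_le_sub_one_of_pos (show 0 < 1 + x by linarith [hx.1]), hx.2]
  have := hanti ⟨hy, hy0⟩ ⟨by norm_num, le_rfl⟩ hy0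
  simp only [g, add_zero, log_one, mul_zero, sub_zero] at this
  linarith

/-- The exponent in the multiplicative Chernoff bounds: `y = δ` gives the upper tail and
`y = -δ` the lower tail. -/
theorem sq_div_three_le_one_add_mul_log_sub {y : ℝ} (hy : -1 < y) (hy1 : y ≤ 1) :
    y ^ 2 / 3 ≤ (1 + y) * log (1 + y) - y := by
  rcases le_total 0 y with hy0 | hy0
  · exact sq_div_three_le_one_add_mul_log_sub_of_nonneg hy0 hy1
  · exact sq_div_three_le_one_add_mul_log_sub_of_nonpos hy hy0

section PermCounting

variable {α : Type*} [Fintype α] [DecidableEq α]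

theorem card_perm_fixing (T : Finset α) :
    #{σ : Perm α | ∀ t ∈ T, σ t = t} = (Fintype.card α - #T)! := by
  rw [← Fintype.card_subtype]
  have e : {σ : Perm α // ∀ t ∈ T, σ t = t} ≃ Perm {x // x ∉ T} :=
    (subtypeEquivRight fun σ => by simp only [not_not]).trans
      (Perm.subtypeEquivSubtypePerm (· ∉ T)).symm
  rw [Fintype.card_congr e, Fintype.card_perm, Fintype.card_subtype_compl, Fintype.card_coe]

theorem card_perm_eqOn (T : Finset α) (σ₀ : Perm α) :
    #{σ : Perm α | ∀ t ∈ T, σ t = σ₀ t} = (Fintype.card α - #T)! := by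
  rw [← card_perm_fixing T]
  refine card_bij' (fun σ _ => σ₀⁻¹ * σ) (fun τ _ => σ₀ * τ) ?_ ?_ ?_ ?_
  · intro σ hσ
    simp_all [Perm.mul_apply]
  · intro τ hτ
    simp_all [Perm.mul_apply]
  · intro σ _; simp
  · intro τ _; simp [← mul_assoc]

theorem exists_perm_extend {T : Finset α} (g : T → α) (hg : Function.Injective g) :
    ∃ σ : Perm α, ∀ t : T, σ t = g t :=
  ⟨extendSubtype (p := (· ∈ T)) (q := (· ∈ Set.range g)) (ofInjective g hg), fun t => by
    rw [extendSubtype_apply_of_mem _ _ t.2]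
    simp [ofInjective_apply]⟩

theorem card_filter_injective_forall_mem (T C : Finset α) :
    #{g : T → α | Function.Injective g ∧ ∀ t, g t ∈ C} = (#C).descFactorial #T := by
  let e : {g : T → α // Function.Injective g ∧ ∀ t, g t ∈ C} ≃ (T ↪ C) :=
    { toFun := fun g => ⟨fun t => ⟨g.1 t, g.2.2 t⟩, fun a b h => g.2.1 (congrArg Subtype.val h)⟩
      invFun := fun e => ⟨fun t => e t, fun a b h => e.injective (Subtype.coe_injective h),
        fun t => (e t).2⟩
      left_inv := fun g => rfl
      right_inv := fun e => rfl }
  rw [← Fintype.card_subtype, Fintype.card_congr e, Fintype.card_embedding_eq,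
    Fintype.card_coe, Fintype.card_coe]

/-- Restricting to `T` maps the permutations sending `T` into `C` onto the embeddings
`T ↪ C`, each fibre being a coset of the pointwise stabiliser of `T`. -/
theorem card_perm_mapsTo (T C : Finset α) :
    #{σ : Perm α | ∀ t ∈ T, σ t ∈ C} = (#C).descFactorial #T * (Fintype.card α - #T)! := by
  let restrict : Perm α → (T → α) := fun σ t => σ t
  let G : Finset (T → α) := {g | Function.Injective g ∧ ∀ t, g t ∈ C}
  have hmaps : ∀ σ ∈ ({σ : Perm α | ∀ t ∈ T, σ t ∈ C} : Finset _), restrict σ ∈ G := by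
    intro σ hσ
    simp only [G, mem_filter, mem_univ, true_and] at hσ ⊢
    exact ⟨fun a b h => Subtype.ext (σ.injective h), fun t => hσ t t.2⟩
  have hfibre : ∀ g ∈ G, #{σ ∈ ({σ : Perm α | ∀ t ∈ T, σ t ∈ C} : Finset _) | restrict σ = g}
      = (Fintype.card α - #T)! := by
    intro g hg
    simp only [G, mem_filter, mem_univ, true_and] at hg
    obtain ⟨σ₀, hσ₀⟩ := exists_perm_extend g hg.1
    rw [← card_perm_eqOn T σ₀]
    congr 1
    ext σ
    simp only [restrict, mem_filter, mem_univ, true_and, funext_iff]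
    constructor
    · rintro ⟨-, h⟩ t ht
      exact (h ⟨t, ht⟩).trans (hσ₀ ⟨t, ht⟩).symm
    · intro h
      refine ⟨fun t ht => ?_, fun t => by rw [h t t.2, hσ₀]⟩
      rw [h t ht, hσ₀ ⟨t, ht⟩]
      exact hg.2 ⟨t, ht⟩
  rw [card_eq_sum_card_fiberwise hmaps, sum_congr rfl hfibre, sum_const,
    card_filter_injective_forall_mem, smul_eq_mul]

theorem card_perm_mapsTo_le (T C : Finset α) :
    (#{σ : Perm α | ∀ t ∈ T, σ t ∈ C} : ℝ) ≤ (Fintype.card α)! * (#C / Fintype.card α) ^ #T := by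
  set N := Fintype.card α
  have hTN : #T ≤ N := card_le_univ T
  have hNpos : (0 : ℝ) < (N : ℝ) ^ #T := by
    rcases Nat.eq_zero_or_pos N with hN | hN
    · simp [hN, Nat.le_zero.mp (hN ▸ hTN)]
    · positivity
  have hdesc : ((#C).descFactorial #T : ℝ) * N ^ #T ≤ N.descFactorial #T * #C ^ #T := by
    exact_mod_cast Nat.descFactorial_mul_pow_le (card_le_univ C) _
  rw [card_perm_mapsTo, div_pow, ← mul_div_assoc, le_div_iff₀ hNpos,
    ← Nat.factorial_mul_descFactorial hTN]
  push_cast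
  nlinarith [(N - #T).factorial_pos]

end PermCounting

section MomentGeneratingFunction

variable {α : Type*} [Fintype α] [DecidableEq α]

theorem one_add_pow_card_filter_mem (σ : Perm α) (S C : Finset α) (w : ℝ) :
    (1 + w) ^ #{t ∈ S | σ t ∈ C}
      = ∑ T ∈ S.powerset, if ∀ t ∈ T, σ t ∈ C then w ^ #T else 0 := by
  have hpowerset : {t ∈ S | σ t ∈ C}.powerset = {T ∈ S.powerset | ∀ t ∈ T, σ t ∈ C} := by
    ext T
    simp only [mem_powerset, mem_filter, subset_iff]
    exact ⟨fun h => ⟨fun t ht => (h ht).1, fun t ht => (h ht).2⟩,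
      fun h t ht => ⟨h.1 ht, h.2 t ht⟩⟩
  rw [← sum_filter, ← hpowerset, add_comm, ← sum_pow_mul_eq_add_pow]
  simp

theorem sum_perm_one_add_pow_le (S C : Finset α) {w : ℝ} (hw : 0 ≤ w) :
    ∑ σ : Perm α, (1 + w) ^ #{t ∈ S | σ t ∈ C}
      ≤ (Fintype.card α)! * (1 + w * #C / Fintype.card α) ^ #S := by
  calc ∑ σ : Perm α, (1 + w) ^ #{t ∈ S | σ t ∈ C}
      = ∑ T ∈ S.powerset, w ^ #T * #{σ : Perm α | ∀ t ∈ T, σ t ∈ C} := by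
        simp_rw [one_add_pow_card_filter_mem]
        rw [sum_comm]
        refine sum_congr rfl fun T _ => ?_
        rw [← sum_filter, sum_const, nsmul_eq_mul, mul_comm]
    _ ≤ ∑ T ∈ S.powerset, w ^ #T * ((Fintype.card α)! * (#C / Fintype.card α) ^ #T) := by
        gcongr with T
        exact card_perm_mapsTo_le T C
    _ = (Fintype.card α)! * (1 + w * #C / Fintype.card α) ^ #S := by
        rw [add_comm, ← sum_pow_mul_eq_add_pow, mul_sum]
        refine sum_congr rfl fun T _ => ?_
        rw [one_pow, mul_one, mul_div_assoc, mul_pow]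
        ring

/-- For `z < 1` one counts the misses instead: `z ^ X = z ^ #S * (1 / z) ^ (#S - X)`, and
`#S - X` counts the elements of `S` sent into `Cᶜ`. -/
theorem sum_perm_pow_le (S C : Finset α) {z : ℝ} (hz : 0 < z) :
    ∑ σ : Perm α, z ^ #{t ∈ S | σ t ∈ C}
      ≤ (Fintype.card α)! * (1 + (z - 1) * #C / Fintype.card α) ^ #S := by
  set N := Fintype.card α
  rcases le_or_gt 1 z with h1 | h1
  · simpa using sum_perm_one_add_pow_le S C (sub_nonneg.mpr h1)
  have hsplit (σ : Perm α) :
      z ^ #{t ∈ S | σ t ∈ C} = z ^ #S * (1 + (z⁻¹ - 1)) ^ #{t ∈ S | σ t ∈ Cᶜ} := by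
    rw [← card_filter_add_card_filter_not (s := S) (fun t => σ t ∈ C)]
    simp only [mem_compl, add_sub_cancel, inv_pow, pow_add]
    field_simp
  have hcompl : ((#Cᶜ : ℕ) : ℝ) = N - #C := by
    rw [card_compl, Nat.cast_sub (card_le_univ C)]
  calc ∑ σ : Perm α, z ^ #{t ∈ S | σ t ∈ C}
      = z ^ #S * ∑ σ : Perm α, (1 + (z⁻¹ - 1)) ^ #{t ∈ S | σ t ∈ Cᶜ} := by
        simp_rw [hsplit, mul_sum]
    _ ≤ z ^ #S * (N ! * (1 + (z⁻¹ - 1) * #Cᶜ / N) ^ #S) := by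
        gcongr
        exact sum_perm_one_add_pow_le S Cᶜ (by rw [sub_nonneg]; exact one_le_inv₀ hz |>.mpr h1.le)
    _ = N ! * (1 + (z - 1) * #C / N) ^ #S := by
        rw [← mul_assoc, mul_comm (z ^ _), mul_assoc, ← mul_pow, hcompl]
        rcases Nat.eq_zero_or_pos N with hN | hN
        · simp [hN, Nat.le_zero.mp ((card_le_univ S).trans_eq hN)]
        · congr 2
          field_simp
          ring

theorem sum_perm_pow_le_exp (S C : Finset α) {z : ℝ} (hz : 0 < z) :
    ∑ σ : Perm α, z ^ #{t ∈ S | σ t ∈ C}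
      ≤ (Fintype.card α)! * exp ((z - 1) * (#S * #C / Fintype.card α)) := by
  set N := Fintype.card α
  refine (sum_perm_pow_le S C hz).trans ?_
  have hbase : 0 ≤ 1 + (z - 1) * #C / N := by
    have hC : (#C : ℝ) / N ≤ 1 :=
      div_le_one_of_le₀ (by exact_mod_cast card_le_univ C) (by positivity)
    have hzC : 0 ≤ z * (#C / N) := by positivity
    rw [show (z - 1) * #C / N = z * (#C / N) - #C / N by ring]
    linarith
  calc (N ! : ℝ) * (1 + (z - 1) * #C / N) ^ #S ≤ N ! * exp ((z - 1) * #C / N) ^ #S := by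
        gcongr
        linarith [add_one_le_exp ((z - 1) * #C / N)]
    _ = N ! * exp ((z - 1) * (#S * #C / N)) := by
        rw [← exp_nat_mul]
        ring_nf

end MomentGeneratingFunction

section Chernoff

variable {α : Type*} [Fintype α] [DecidableEq α]

/-- Markov's inequality applied to `(1 + y) ^ X`, where `X σ = #{t ∈ S | σ t ∈ C}`;
the event is `(1 + y) μ ≤ X` for `y ≥ 0` and `X ≤ (1 + y) μ` for `y ≤ 0`. -/
theorem card_perm_log_mul_le (S C : Finset α) {y : ℝ} (hy : -1 < y) (hy1 : y ≤ 1) :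
    (#{σ : Perm α | log (1 + y) * ((1 + y) * (#S * #C / Fintype.card α))
        ≤ log (1 + y) * #{t ∈ S | σ t ∈ C}} : ℝ)
      ≤ (Fintype.card α)! * exp (-(y ^ 2 * (#S * #C / Fintype.card α)) / 3) := by
  set μ : ℝ := #S * #C / Fintype.card α
  have hμ : 0 ≤ μ := by positivity
  have hy' : 0 < 1 + y := by linarith
  have hmarkov := card_filter_mul_exp_le_sum univ
    (fun σ : Perm α => log (1 + y) * #{t ∈ S | σ t ∈ C}) (log (1 + y) * ((1 + y) * μ))
  have hmgf : ∑ σ : Perm α, exp (log (1 + y) * #{t ∈ S | σ t ∈ C})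
      ≤ (Fintype.card α)! * exp (y * μ) := by
    simpa [mul_comm (log (1 + y)), exp_nat_mul, exp_log hy'] using sum_perm_pow_le_exp S C hy'
  calc (#{σ : Perm α | log (1 + y) * ((1 + y) * μ) ≤ log (1 + y) * #{t ∈ S | σ t ∈ C}} : ℝ)
      ≤ (Fintype.card α)! * exp (y * μ) / exp (log (1 + y) * ((1 + y) * μ)) := by
        rw [le_div_iff₀ (exp_pos _)]
        exact hmarkov.trans hmgf
    _ = (Fintype.card α)! * exp (-(μ * ((1 + y) * log (1 + y) - y))) := by
        rw [mul_div_assoc, ← exp_sub]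
        ring_nf
    _ ≤ (Fintype.card α)! * exp (-(y ^ 2 * μ) / 3) := by
        gcongr
        nlinarith [mul_le_mul_of_nonneg_left (sq_div_three_le_one_add_mul_log_sub hy hy1) hμ]

theorem card_perm_one_add_mul_lt_le (S C : Finset α) {δ : ℝ} (hδ0 : 0 ≤ δ) (hδ1 : δ ≤ 1) :
    (#{σ : Perm α | (1 + δ) * (#S * #C / Fintype.card α) < #{t ∈ S | σ t ∈ C}} : ℝ)
      ≤ (Fintype.card α)! * exp (-(δ ^ 2 * (#S * #C / Fintype.card α)) / 3) := by
  refine le_trans (Nat.cast_le.mpr (card_le_card (monotone_filter_right _ fun σ _ hσ => ?_)))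
    (card_perm_log_mul_le S C (y := δ) (by linarith) hδ1)
  exact mul_le_mul_of_nonneg_left hσ.le (log_nonneg (by linarith))

theorem card_perm_lt_one_sub_mul_le (S C : Finset α) {δ : ℝ} (hδ0 : 0 ≤ δ) (hδ1 : δ ≤ 1) :
    (#{σ : Perm α | #{t ∈ S | σ t ∈ C} < (1 - δ) * (#S * #C / Fintype.card α)} : ℝ)
      ≤ (Fintype.card α)! * exp (-(δ ^ 2 * (#S * #C / Fintype.card α)) / 3) := by
  rcases hδ1.lt_or_eq with hδ1 | rfl
  · have h := card_perm_log_mul_le S C (y := -δ) (by linarith) (by linarith)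
    rw [neg_sq, ← sub_eq_add_neg] at h
    refine le_trans (Nat.cast_le.mpr (card_le_card (monotone_filter_right _ fun σ _ hσ => ?_))) h
    exact mul_le_mul_of_nonpos_left hσ.le (log_nonpos (by linarith) (by linarith))
  · rw [sub_self, zero_mul, filter_eq_empty_iff.mpr fun σ _ => (Nat.cast_nonneg _).not_gt,
      card_empty, Nat.cast_zero]
    positivity

theorem card_perm_not_abs_sub_le (S C : Finset α) {δ : ℝ} (hδ0 : 0 ≤ δ) (hδ1 : δ ≤ 1) :
    (#{σ : Perm α | ¬ |(#{t ∈ S | σ t ∈ C} : ℝ) - #S * #C / Fintype.card α|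
        ≤ δ * (#S * #C / Fintype.card α)} : ℝ)
      ≤ 2 * (Fintype.card α)! * exp (-(δ ^ 2 * (#S * #C / Fintype.card α)) / 3) := by
  set μ : ℝ := #S * #C / Fintype.card α
  have hsub : ({σ : Perm α | ¬ |(#{t ∈ S | σ t ∈ C} : ℝ) - μ| ≤ δ * μ} : Finset (Perm α))
      ⊆ ({σ : Perm α | (1 + δ) * μ < #{t ∈ S | σ t ∈ C}} : Finset (Perm α))
        ∪ ({σ : Perm α | #{t ∈ S | σ t ∈ C} < (1 - δ) * μ} : Finset (Perm α)) := by
    intro σ hσ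
    simp only [mem_union, mem_filter, mem_univ, true_and, abs_le, not_and_or, not_le] at hσ ⊢
    rcases hσ with h | h
    · right; linarith
    · left; linarith
  calc (#{σ : Perm α | ¬ |(#{t ∈ S | σ t ∈ C} : ℝ) - μ| ≤ δ * μ} : ℝ)
      ≤ #{σ : Perm α | (1 + δ) * μ < #{t ∈ S | σ t ∈ C}}
        + #{σ : Perm α | #{t ∈ S | σ t ∈ C} < (1 - δ) * μ} := by
        exact_mod_cast (card_le_card hsub).trans (card_union_le _ _)
    _ ≤ _ := by
        linarith [card_perm_one_add_mul_lt_le S C hδ0 hδ1, card_perm_lt_one_sub_mul_le S C hδ0 hδ1]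

theorem card_perm_not_abs_sub_div_le (S C : Finset α) {r : ℝ} (hC : (#C : ℝ) * r = Fintype.card α)
    {δ : ℝ} (hδ0 : 0 ≤ δ) (hδ1 : δ ≤ 1) :
    (#{σ : Perm α | ¬ |(#{t ∈ S | σ t ∈ C} : ℝ) - #S / r| ≤ δ * #S / r} : ℝ)
      ≤ (Fintype.card α)! * (2 * exp (-(δ ^ 2 * #S) / (3 * r))) := by
  have hμ : (#S * #C / Fintype.card α : ℝ) = #S / r := by
    rcases Nat.eq_zero_or_pos (Fintype.card α) with hN | hN
    · simp [hN, Nat.le_zero.mp ((card_le_univ S).trans_eq hN)]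
    · have hN' : (Fintype.card α : ℝ) ≠ 0 := by positivity
      have hr : r ≠ 0 := by rintro rfl; exact hN' (by rw [← hC, mul_zero])
      have hC0 : (#C : ℝ) ≠ 0 := by rintro h; exact hN' (by rw [← hC, h, zero_mul])
      rw [← hC]
      field_simp
  have h := card_perm_not_abs_sub_le S C hδ0 hδ1
  rw [hμ, ← mul_div_assoc] at h
  convert h using 1
  ring_nf

end Chernoff

section GoodPermutation

variable {m : ℕ}

theorem card_perm_half_deviation_le (hm : 2 ∣ m) (S : Finset (Fin m))
    {δ : ℝ} (hδ0 : 0 ≤ δ) (hδ1 : δ ≤ 1) :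
    (#{σ : Perm (Fin m) | ¬ |(#{t ∈ S | (σ t : ℕ) < m / 2} : ℝ) - #S / 2| ≤ δ * #S / 2} : ℝ)
      ≤ m ! * (2 * exp (-(δ ^ 2 * #S) / 6)) := by
  have hH : (#{x : Fin m | (x : ℕ) < m / 2} : ℝ) * 2 = Fintype.card (Fin m) := by
    rw [Fin.card_filter_val_lt, min_eq_right (Nat.div_le_self _ _), Fintype.card_fin]
    exact_mod_cast Nat.div_mul_cancel hm
  have h := card_perm_not_abs_sub_div_le S _ hH hδ0 hδ1
  simp only [mem_filter, mem_univ, true_and, Fintype.card_fin] at h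
  convert h using 4
  norm_num

theorem card_perm_chunk_deviation_le {κ k : ℕ} (hdiv : 2 * κ ∣ m)
    (hk : k ∈ Icc 1 κ) (S : Finset (Fin m)) {δ : ℝ} (hδ0 : 0 ≤ δ) (hδ1 : δ ≤ 1) :
    (#{σ : Perm (Fin m) | ¬ |(#{t ∈ S | m / 2 + (k - 1) * (m / (2 * κ)) ≤ (σ t : ℕ) ∧
        (σ t : ℕ) < m / 2 + k * (m / (2 * κ))} : ℝ) - #S / (2 * κ)| ≤ δ * #S / (2 * κ)} : ℝ)
      ≤ m ! * (2 * exp (-(δ ^ 2 * #S) / (6 * κ))) := by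
  obtain ⟨hk1, hkκ⟩ := mem_Icc.mp hk
  set q := m / (2 * κ)
  have hm : q * (2 * κ) = m := Nat.div_mul_cancel hdiv
  have hhalf : m / 2 = κ * q := by
    rw [← hm, show q * (2 * κ) = 2 * (κ * q) by ring, Nat.mul_div_cancel_left _ two_pos]
  have hCk : (#{x : Fin m | m / 2 + (k - 1) * q ≤ (x : ℕ) ∧ (x : ℕ) < m / 2 + k * q} : ℝ)
      * (2 * κ) = Fintype.card (Fin m) := by
    rw [Fin.card_filter_le_val_and_val_lt, Fintype.card_fin]
    · rw [show m / 2 + k * q - (m / 2 + (k - 1) * q) = q by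
        obtain ⟨j, rfl⟩ := Nat.exists_eq_add_of_le' hk1
        rw [Nat.add_sub_cancel, add_mul, one_mul, ← add_assoc, Nat.add_sub_cancel_left]]
      exact_mod_cast hm
    · nlinarith
  have h := card_perm_not_abs_sub_div_le S _ hCk hδ0 hδ1
  simp only [mem_filter, mem_univ, true_and, Fintype.card_fin] at h
  convert h using 4
  ring

end GoodPermutation

theorem stmt_2_general (m κ : ℕ) (hdiv : 2 * κ ∣ m)
    (δ : ℝ) (hδ0 : 0 < δ) (hδ1 : δ ≤ 1)
    (A B : Finset (Fin m)) :
    1 - 2 * Real.exp (-(δ ^ 2 * (A.card : ℝ)) / 6)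
      - 2 * Real.exp (-(δ ^ 2 * (B.card : ℝ)) / 6)
      - 2 * (κ : ℝ) * Real.exp (-(δ ^ 2 * ((A ∩ B).card : ℝ)) / (6 * κ))
    ≤ ((Finset.univ.filter (fun σ : Equiv.Perm (Fin m) =>
          |((A.filter (fun t => ((σ t : ℕ) < m / 2))).card : ℝ) - (A.card : ℝ) / 2|
              ≤ δ * (A.card : ℝ) / 2 ∧
          |((B.filter (fun t => ((σ t : ℕ) < m / 2))).card : ℝ) - (B.card : ℝ) / 2|
              ≤ δ * (B.card : ℝ) / 2 ∧
          ∀ k ∈ Finset.Icc 1 κ,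
            |(((A ∩ B).filter (fun t =>
                m / 2 + (k - 1) * (m / (2 * κ)) ≤ (σ t : ℕ) ∧
                  (σ t : ℕ) < m / 2 + k * (m / (2 * κ)))).card : ℝ)
              - ((A ∩ B).card : ℝ) / (2 * κ)|
              ≤ δ * ((A ∩ B).card : ℝ) / (2 * κ))).card : ℝ)
      / (Fintype.card (Equiv.Perm (Fin m)) : ℝ) := by
  have hm2 : 2 ∣ m := (Dvd.intro κ rfl).trans hdiv
  have hgood := le_card_filter_and_and_forall
    (card_perm_half_deviation_le hm2 A hδ0.le hδ1)
    (card_perm_half_deviation_le hm2 B hδ0.le hδ1)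
    fun k hk => card_perm_chunk_deviation_le hdiv hk (A ∩ B) hδ0.le hδ1
  rw [Fintype.card_perm, Fintype.card_fin, Nat.card_Icc, Nat.add_sub_cancel] at hgood
  rw [Fintype.card_perm, Fintype.card_fin, le_div_iff₀ (by positivity)]
  refine le_of_eq_of_le ?_ (hgood.trans_eq ?_)
  · ring
  · -- the `∀ k ∈ Icc 1 κ` clause is decided by different (propositionally equal) instances
    congr!

/-- Good permutation lemma: For `m, κ` positive with `2κ ∣ m`,
`δ ∈ (0,1]`, and `A, B ⊆ Fin m` with `A ∩ B` nonempty, a uniformly random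
permutation `σ` of `Fin m` is "good" — meaning the number of elements of `A`
(resp. `B`) landing in the first half `H = {t : t < m/2}` is within `δ·|A|/2` of
`|A|/2` (resp. within `δ·|B|/2` of `|B|/2`), and for every `k ∈ {1,…,κ}` the number
of elements of `A ∩ B` landing in the k-th chunk
`C_k = {t : m/2 + (k−1)·m/(2κ) ≤ t < m/2 + k·m/(2κ)}` is within `δ·|A∩B|/(2κ)` of
`|A∩B|/(2κ)` — with probability at least
`1 − 2·exp(−δ²·|A|/6) − 2·exp(−δ²·|B|/6) − 2κ·exp(−δ²·|A∩B|/(6κ))`. -/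
theorem stmt_2 (m κ : ℕ) (hm : 0 < m) (hκ : 0 < κ) (hdiv : 2 * κ ∣ m)
    (δ : ℝ) (hδ0 : 0 < δ) (hδ1 : δ ≤ 1)
    (A B : Finset (Fin m)) (hAB : (A ∩ B).Nonempty) :
    1 - 2 * Real.exp (-(δ ^ 2 * (A.card : ℝ)) / 6)
      - 2 * Real.exp (-(δ ^ 2 * (B.card : ℝ)) / 6)
      - 2 * (κ : ℝ) * Real.exp (-(δ ^ 2 * ((A ∩ B).card : ℝ)) / (6 * κ))
    ≤ ((Finset.univ.filter (fun σ : Equiv.Perm (Fin m) =>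
          |((A.filter (fun t => ((σ t : ℕ) < m / 2))).card : ℝ) - (A.card : ℝ) / 2|
              ≤ δ * (A.card : ℝ) / 2 ∧
          |((B.filter (fun t => ((σ t : ℕ) < m / 2))).card : ℝ) - (B.card : ℝ) / 2|
              ≤ δ * (B.card : ℝ) / 2 ∧
          ∀ k ∈ Finset.Icc 1 κ,
            |(((A ∩ B).filter (fun t =>
                m / 2 + (k - 1) * (m / (2 * κ)) ≤ (σ t : ℕ) ∧
                  (σ t : ℕ) < m / 2 + k * (m / (2 * κ)))).card : ℝ)
              - ((A ∩ B).card : ℝ) / (2 * κ)|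
              ≤ δ * ((A ∩ B).card : ℝ) / (2 * κ))).card : ℝ)
      / (Fintype.card (Equiv.Perm (Fin m)) : ℝ) :=
  stmt_2_general m κ hdiv δ hδ0 hδ1 A B
end

section
/- (Correctness of reservoir sampling.) Let s ≤ n be positive integers. Define a sequence of probability distributions μ_t on s-element subsets of {1,…,t}, for t = s, s+1, …, n, as follows: μ_s is the point mass on the set {1,…,s}; and μ_{t+1} is obtained from μ_t by the following random transition applied to a subset R drawn from μ_t: with probability s/(t+1), choose an element v of R uniformly at random and replace R by (R \ {v}) ∪ {t+1}; otherwise (with probability 1 − s/(t+1)) keep R unchanged. Then μ_n is the uniform distribution on the collection of all s-element subsets of {1,…,n}: every s-element subset of {1,…,n} has probability 1/C(n,s) under μ_n. -/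
/-!
Induction on the time `t`. Suppose `μ_t` is uniform and fix an `s`-subset `R` of `{1,…,t+1}`.
If `t+1 ∉ R`, the only way to reach `R` is to keep it, with probability `1 - s/(t+1)`. If
`t+1 ∈ R`, then `R` is reached from `R'` by evicting `v` exactly when `R' = (R \ {t+1}) ∪ {v}`
for some `v ∈ {1,…,t} \ R`: these are `t+1-s` moves of probability `1/(t+1)` each. Either way
`μ_{t+1}(R) = C(t,s)⁻¹ (t+1-s)/(t+1) = C(t+1,s)⁻¹`.
-/

/-- The one-step transition probability of reservoir sampling with reservoir size `s`,
going from time `t` to time `t+1`: from the current reservoir `R'` (an `s`-element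
subset of `{1,…,t}`), with probability `s/(t+1)` a uniformly random element `v ∈ R'`
is replaced by the new element `t+1` (each concrete `v` thus contributes probability
`(s/(t+1))·(1/s) = 1/(t+1)`), and otherwise (with probability `1 − s/(t+1)`) the
reservoir stays unchanged.  `resStep s t R' R` is the probability of moving from
`R'` to `R`. -/
noncomputable def resStep (s t : ℕ) (R' R : Finset ℕ) : ℝ :=
  (if R = R' then 1 - (s : ℝ) / ((t : ℝ) + 1) else 0)
    + ((s : ℝ) / ((t : ℝ) + 1)) *
        (((R'.filter (fun v => insert (t + 1) (R'.erase v) = R)).card : ℝ) / (s : ℝ))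

/-- The distribution `μ_{s+j}` of the reservoir after processing items `1,…,s+j`:
`resDist s j R` is the probability that the reservoir equals `R` at time `t = s + j`.
At time `t = s` (i.e. `j = 0`) it is the point mass on `{1,…,s}`, and `μ_{t+1}` is
obtained from `μ_t` by applying the transition kernel `resStep`. -/
noncomputable def resDist (s : ℕ) : ℕ → Finset ℕ → ℝ
  | 0, R => if R = Finset.Icc 1 s then 1 else 0
  | j + 1, R =>
      ∑ R' ∈ (Finset.Icc 1 (s + j)).powersetCard s, resDist s j R' * resStep s (s + j) R' R

open Finset

theorem sum_card_filter_erase_eq {α : Type*} [DecidableEq α] {S R₀ : Finset α} (h : R₀ ⊆ S) :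
    ∑ R' ∈ S.powersetCard (#R₀ + 1), #(R'.filter fun v => R'.erase v = R₀) = #(S \ R₀) := by
  rw [← card_sigma]
  refine card_bij' (fun p _ => p.2) (fun v _ => ⟨insert v R₀, v⟩) ?_ ?_ ?_ fun _ _ => rfl
  · rintro ⟨R', v⟩ hp
    simp only [mem_sigma, mem_powersetCard, mem_filter] at hp
    obtain ⟨⟨hR'S, -⟩, hv, rfl⟩ := hp
    exact mem_sdiff.2 ⟨hR'S hv, notMem_erase v R'⟩
  · intro v hv
    obtain ⟨hvS, hvR₀⟩ := mem_sdiff.1 hv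
    simp only [mem_sigma, mem_powersetCard, mem_filter]
    exact ⟨⟨insert_subset hvS h, card_insert_of_notMem hvR₀⟩, mem_insert_self v R₀,
      erase_insert hvR₀⟩
  · rintro ⟨R', v⟩ hp
    simp only [mem_sigma, mem_powersetCard, mem_filter] at hp
    obtain ⟨-, hv, rfl⟩ := hp
    simp only [insert_erase hv]

theorem le_of_mem_powersetCard_Icc {s n : ℕ} {R : Finset ℕ}
    (hR : R ∈ (Icc 1 n).powersetCard s) : s ≤ n := by
  simpa using powersetCard_nonempty.1 ⟨R, hR⟩

theorem subset_Icc_of_notMem {a b : ℕ} {X : Finset ℕ} (hX : X ⊆ Icc a (b + 1))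
    (hb : b + 1 ∉ X) : X ⊆ Icc a b := fun x hx => by
  have hx' := hX hx
  have : x ≠ b + 1 := fun h => hb (h ▸ hx)
  simp only [mem_Icc] at hx' ⊢
  omega

theorem sum_card_filter_insert_erase_eq {s t : ℕ} {R : Finset ℕ}
    (hR : R ∈ (Icc 1 (t + 1)).powersetCard s) (ht : t + 1 ∈ R) :
    ∑ R' ∈ (Icc 1 t).powersetCard s,
      #(R'.filter fun v => insert (t + 1) (R'.erase v) = R) = t + 1 - s := by
  obtain ⟨hRsub, rfl⟩ := mem_powersetCard.1 hR
  have hR₀ : R.erase (t + 1) ⊆ Icc 1 t :=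
    subset_Icc_of_notMem ((erase_subset _ _).trans hRsub) (notMem_erase _ _)
  have hfilter : ∀ R' ∈ (Icc 1 t).powersetCard #R,
      (R'.filter fun v => insert (t + 1) (R'.erase v) = R)
        = R'.filter (R'.erase · = R.erase (t + 1)) := by
    intro R' hR'
    have hnot : t + 1 ∉ R' := fun h => by simpa using (mem_powersetCard.1 hR').1 h
    refine filter_congr fun v _ => ⟨fun h => ?_, fun h => by rw [h, insert_erase ht]⟩
    rw [← h, erase_insert (fun h' => hnot (mem_of_mem_erase h'))]
  rw [sum_congr rfl fun R' hR' => by rw [hfilter R' hR'], ← card_erase_add_one ht,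
    sum_card_filter_erase_eq hR₀, card_sdiff_of_subset hR₀, Nat.card_Icc, card_erase_of_mem ht]
  omega

theorem sum_resStep {s t : ℕ} {R : Finset ℕ} (hR : R ∈ (Icc 1 (t + 1)).powersetCard s) :
    ∑ R' ∈ (Icc 1 t).powersetCard s, resStep s t R' R = ((t : ℝ) + 1 - s) / (t + 1) := by
  obtain ⟨hRsub, hcard⟩ := mem_powersetCard.1 hR
  have ht : (t : ℝ) + 1 ≠ 0 := by positivity
  simp only [resStep, sum_add_distrib, sum_ite_eq, ← mul_sum, ← sum_div, ← Nat.cast_sum]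
  by_cases hmem : t + 1 ∈ R
  · have hs : (s : ℝ) ≠ 0 := by
      rw [← hcard]
      exact_mod_cast (card_pos.2 ⟨_, hmem⟩).ne'
    have hR' : R ∉ (Icc 1 t).powersetCard s := fun h => by
      simpa using (mem_powersetCard.1 h).1 hmem
    rw [if_neg hR', sum_card_filter_insert_erase_eq hR hmem,
      Nat.cast_sub (le_of_mem_powersetCard_Icc hR)]
    field_simp
    push_cast
    ring
  · have hR' : R ∈ (Icc 1 t).powersetCard s :=
      mem_powersetCard.2 ⟨subset_Icc_of_notMem hRsub hmem, hcard⟩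
    have hempty : ∀ R' : Finset ℕ, (R'.filter fun v => insert (t + 1) (R'.erase v) = R) = ∅ :=
      fun R' => filter_eq_empty_iff.2 fun v _ h => hmem (h ▸ mem_insert_self _ _)
    simp only [hempty, card_empty, sum_const_zero, Nat.cast_zero, zero_div, mul_zero, add_zero,
      if_pos hR']
    field_simp

theorem resDist_eq_inv_choose (s j : ℕ) {R : Finset ℕ}
    (hR : R ∈ (Icc 1 (s + j)).powersetCard s) :
    resDist s j R = ((s + j).choose s : ℝ)⁻¹ := by
  induction j generalizing R with
  | zero =>
    obtain ⟨hRsub, hcard⟩ := mem_powersetCard.1 hR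
    have : R = Icc 1 s := eq_of_subset_of_card_le hRsub (by simp [hcard])
    simp [resDist, this]
  | succ j ih =>
    rw [resDist, sum_congr rfl fun R' hR' => by rw [ih hR'], ← mul_sum,
      sum_resStep (t := s + j) hR, show s + (j + 1) = s + j + 1 by omega]
    have hid : ((s + j).choose s : ℝ) * ((s + j : ℕ) + 1)
        = ((s + j + 1).choose s : ℝ) * ((s + j : ℕ) + 1 - s) := by
      have := congrArg (Nat.cast : ℕ → ℝ) (Nat.choose_mul_succ_eq (s + j) s)
      push_cast [Nat.cast_sub (by omega : s ≤ s + j + 1)] at this ⊢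
      exact this
    have hC : ((s + j).choose s : ℝ) ≠ 0 := by exact_mod_cast (Nat.choose_pos (by omega)).ne'
    have hC' : ((s + j + 1).choose s : ℝ) ≠ 0 := by exact_mod_cast (Nat.choose_pos (by omega)).ne'
    field_simp
    rw [hid]
    ring

theorem stmt_5_general (s n : ℕ)
    (R : Finset ℕ) (hR : R ∈ (Finset.Icc 1 n).powersetCard s) :
    resDist s (n - s) R = 1 / (n.choose s : ℝ) := by
  obtain ⟨j, rfl⟩ := Nat.exists_eq_add_of_le (le_of_mem_powersetCard_Icc hR)
  rw [Nat.add_sub_cancel_left, resDist_eq_inv_choose s j hR, one_div]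

/-- Correctness of reservoir sampling: for positive integers `s ≤ n`,
the reservoir distribution at time `n` is uniform on the `s`-element subsets of
`{1,…,n}`: every `s`-element subset `R ⊆ {1,…,n}` has probability `1/C(n,s)`. -/
theorem stmt_5 (s n : ℕ) (hs : 0 < s) (hsn : s ≤ n)
    (R : Finset ℕ) (hR : R ∈ (Finset.Icc 1 n).powersetCard s) :
    resDist s (n - s) R = 1 / (n.choose s : ℝ) :=
  stmt_5_general s n R hR
end

section
/- (First-phase construction in the lower-bound proof.) Let k ≥ 2, M ≥ 1 and φ ≥ 1 be integers, let F be a finite set of items with k−1 ≤ |F| and |F|·φ ≤ M·(k−1), and let x be an item with x ∉ F. Then there exist sets T_1, …, T_M with the following properties: each T_t ⊆ F ∪ {x}, each |T_t| = k, x ∈ T_t for every t (so in particular no T_t is a subset of F, and hence no k-element subset of F is contained in any T_t), and every item i ∈ F belongs to at least φ of the sets T_1, …, T_M. -/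
/-!
Enumerate `F` cyclically as `i₀, i₁, …, i_{n-1}, i₀, i₁, …` and cut the first `M (k-1)` terms of
this sequence into `M` consecutive blocks of length `k - 1 ≤ |F|`. A block has no repeated item, and
since `|F| φ ≤ M (k-1)` the first `φ` occurrences of every item fall into `φ` distinct blocks. Adding
`x` to every block gives transactions of size `k` that all leave `F`.
-/

open Finset

theorem Nat.strictMono_add_mul_div {n r : ℕ} (hr : 0 < r) (hrn : r ≤ n) (c : ℕ) :
    StrictMono fun s : ℕ => (c + s * n) / r :=
  strictMono_nat_of_lt_succ fun s =>
    calc (c + s * n) / r < (c + s * n) / r + 1 := Nat.lt_succ_self _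
      _ = (c + s * n + r) / r := (Nat.add_div_right _ hr).symm
      _ ≤ (c + (s + 1) * n) / r := Nat.div_le_div_right (by rw [add_one_mul]; omega)

/-- The items of `Fin n` at positions `t r, …, t r + r - 1` of the sequence `0, 1, …, n-1, 0, 1, …`. -/
def cyclicBlock (n : ℕ) [NeZero n] (r t : ℕ) : Finset (Fin n) :=
  (Ico (t * r) (t * r + r)).image (Fin.ofNat n)

section cyclicBlock

variable {n r : ℕ} [NeZero n]

theorem card_cyclicBlock (hrn : r ≤ n) (t : ℕ) : #(cyclicBlock n r t) = r := by
  rw [cyclicBlock, card_image_of_injOn, Nat.card_Ico, Nat.add_sub_cancel_left]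
  intro p hp q hq hpq
  simp only [coe_Ico, Set.mem_Ico] at hp hq
  have hmod : p % n = q % n := by simpa [Fin.ext_iff] using hpq
  exact Nat.ModEq.eq_of_abs_lt hmod (abs_sub_lt_iff.mpr ⟨by omega, by omega⟩)

theorem mem_cyclicBlock_div (hr : 0 < r) (c : Fin n) (s : ℕ) :
    c ∈ cyclicBlock n r ((c + s * n) / r) := by
  refine mem_image.mpr ⟨c + s * n, mem_Ico.mpr ⟨Nat.div_mul_le_self _ _, Nat.lt_div_mul_add hr⟩, ?_⟩
  ext
  simp [Nat.add_mul_mod_self_right, Nat.mod_eq_of_lt c.2]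

theorem le_card_filter_mem_cyclicBlock {M φ : ℕ} (hrn : r ≤ n) (h : n * φ ≤ M * r) (c : Fin n) :
    φ ≤ #{t : Fin M | c ∈ cyclicBlock n r t} := by
  obtain rfl | hr := r.eq_zero_or_pos
  · obtain rfl : φ = 0 := by simpa [NeZero.ne n] using h
    exact Nat.zero_le _
  -- the `s`-th occurrence of `c` sits at position `c + s n < φ n ≤ M r`
  have hlt (s : Fin φ) : (c + (s : ℕ) * n) / r < M := by
    refine (Nat.div_lt_iff_lt_mul hr).mpr (lt_of_lt_of_le ?_ h)
    nlinarith [c.2, s.2]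
  calc φ = #(univ : Finset (Fin φ)) := (card_fin φ).symm
    _ ≤ #{t : Fin M | c ∈ cyclicBlock n r t} :=
      card_le_card_of_injOn (fun s => ⟨(c + s * n) / r, hlt s⟩)
        (fun s _ => by simpa using mem_cyclicBlock_div hr c s)
        (fun s _ s' _ hss' => Fin.ext ((Nat.strictMono_add_mul_div hr hrn c).injective
          (congrArg Fin.val hss')))

end cyclicBlock

theorem Finset.exists_uniform_cover {α : Type*} [DecidableEq α] (F : Finset α) {r M φ : ℕ}
    (hr : r ≤ #F) (h : #F * φ ≤ M * r) :
    ∃ S : Fin M → Finset α, (∀ t, S t ⊆ F) ∧ (∀ t, #(S t) = r) ∧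
      ∀ i ∈ F, φ ≤ #{t | i ∈ S t} := by
  obtain hF | hF := F.eq_empty_or_nonempty
  · subst hF
    exact ⟨fun _ => ∅, fun _ => empty_subset _, fun _ => by simp at hr; simp [hr], by simp⟩
  have : NeZero #F := ⟨hF.card_pos.ne'⟩
  let e : Fin #F ↪ α := F.equivFin.symm.toEmbedding.trans (Function.Embedding.subtype _)
  refine ⟨fun t => (cyclicBlock #F r t).map e, fun t => ?_, fun t => ?_, fun i hi => ?_⟩
  · simp [e, subset_iff]
  · rw [card_map, card_cyclicBlock hr]
  · have he : e (F.equivFin ⟨i, hi⟩) = i := by simp [e]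
    refine (le_card_filter_mem_cyclicBlock hr h (F.equivFin ⟨i, hi⟩)).trans
      (card_le_card (monotone_filter_right _ fun t _ ht => ?_))
    simpa [he] using mem_map_of_mem e ht

theorem stmt_9_general {α : Type*} [DecidableEq α] (k M φ : ℕ)
    (hk : 2 ≤ k)
    (F : Finset α) (hF : k - 1 ≤ F.card) (hFφ : F.card * φ ≤ M * (k - 1))
    (x : α) (hx : x ∉ F) :
    ∃ T : Fin M → Finset α,
      (∀ t, T t ⊆ insert x F) ∧
      (∀ t, (T t).card = k) ∧
      (∀ t, x ∈ T t) ∧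
      (∀ t, ¬ T t ⊆ F) ∧
      (∀ G : Finset α, G ⊆ F → G.card = k → ∀ t, ¬ G ⊆ T t) ∧
      (∀ i ∈ F, φ ≤ (Finset.univ.filter (fun t => i ∈ T t)).card) := by
  obtain ⟨S, hSF, hScard, hcover⟩ := F.exists_uniform_cover hF hFφ
  have hxS (t : Fin M) : x ∉ S t := fun h => hx (hSF t h)
  refine ⟨fun t => insert x (S t), fun t => insert_subset_insert x (hSF t), fun t => ?_,
    fun t => mem_insert_self x _, fun t h => hx (h (mem_insert_self x _)), ?_, fun i hi => ?_⟩
  · rw [card_insert_of_notMem (hxS t), hScard]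
    omega
  · intro G hGF hGk t hGT
    have hGS : G ⊆ S t := (subset_insert_iff_of_notMem fun h => hx (hGF h)).mp hGT
    have := hScard t ▸ card_le_card hGS
    omega
  · exact (hcover i hi).trans
      (card_le_card (monotone_filter_right _ fun _ _ => mem_insert_of_mem))

/-- First-phase construction in the lower-bound proof: Let `k ≥ 2`,
`M ≥ 1`, `φ ≥ 1` be integers, `F` a finite set of items with `k−1 ≤ |F|` and
`|F|·φ ≤ M·(k−1)`, and `x ∉ F`.  Then there exist transactions `T_1, …, T_M`
(indexed by `Fin M`) such that each `T_t ⊆ F ∪ {x}`, each `|T_t| = k`, `x ∈ T_t` for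
every `t` (so in particular no `T_t` is a subset of `F`, and hence no `k`-element
subset of `F` is contained in any `T_t`), and every item `i ∈ F` belongs to at least
`φ` of the transactions. -/
theorem stmt_9 {α : Type*} [DecidableEq α] (k M φ : ℕ)
    (hk : 2 ≤ k) (hM : 1 ≤ M) (hφ : 1 ≤ φ)
    (F : Finset α) (hF : k - 1 ≤ F.card) (hFφ : F.card * φ ≤ M * (k - 1))
    (x : α) (hx : x ∉ F) :
    ∃ T : Fin M → Finset α,
      (∀ t, T t ⊆ insert x F) ∧
      (∀ t, (T t).card = k) ∧
      (∀ t, x ∈ T t) ∧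
      (∀ t, ¬ T t ⊆ F) ∧
      (∀ G : Finset α, G ⊆ F → G.card = k → ∀ t, ¬ G ⊆ T t) ∧
      (∀ i ∈ F, φ ≤ (Finset.univ.filter (fun t => i ∈ T t)).card) :=
  stmt_9_general k M φ hk F hF hFφ x hx
end
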